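/- Let G = C_g(T_1, T_2, …, T_g) be a unicyclic graph with n vertices. Then Sz*_e(G) = Sz_e(G) + (1/4)·n(2n−1) + (1/4)·(2n−3)·g + δ(g)·[ (1/4)·g(5−4n) + (n²−n)/2 − (1/4)·Σ_{i=1}^g |E(T_i)|² ], where δ(g) = 1 if g is odd and δ(g) = 0 if g is even. -/

import Mathlib

set_option linter.unusedSectionVars false

namespace RevSzeged

open Finset

/-- A finite graph with a distinguished root vertex. -/
structure RootedGraph : Type 1 where
  V : Type
  fintypeV : Fintype V
  decEqV : DecidableEq V
  G : SimpleGraph V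
  root : V

attribute [instance] RootedGraph.fintypeV RootedGraph.decEqV

section Index

variable {V : Type} [Fintype V] [DecidableEq V]

/-- The finset of edges of a graph on a finite vertex type. -/
noncomputable def edgeFinset' (G : SimpleGraph V) : Finset (Sym2 V) :=
  (G.edgeSet.toFinite).toFinset

/-- The number of edges of `G`. -/
noncomputable def numEdges (G : SimpleGraph V) : ℕ := (edgeFinset' G).card

/-- Distance from an edge `f` to a vertex `w` : the minimum of the distances
from the two endpoints of `f` to `w`. -/
noncomputable def evDist (G : SimpleGraph V) (f : Sym2 V) (w : V) : ℕ :=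
  Sym2.lift ⟨fun x y => min (G.dist x w) (G.dist y w), fun _ _ => min_comm _ _⟩ f

open scoped Classical in
/-- `mA G u v` = the number of edges of `G` strictly closer to `u` than to `v`. -/
noncomputable def mA (G : SimpleGraph V) (u v : V) : ℕ :=
  ((edgeFinset' G).filter (fun f => evDist G f u < evDist G f v)).card

open scoped Classical in
/-- `m0 G u v` = the number of edges of `G` equidistant from `u` and `v`. -/
noncomputable def m0 (G : SimpleGraph V) (u v : V) : ℕ :=
  ((edgeFinset' G).filter (fun f => evDist G f u = evDist G f v)).card

lemma m0_comm (G : SimpleGraph V) (u v : V) : m0 G u v = m0 G v u := by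
  classical
  unfold m0
  congr 1
  ext f
  simp only [Finset.mem_filter]
  exact and_congr_right fun _ => eq_comm

/-- The summand of the revised edge Szeged index attached to an edge. -/
noncomputable def szContrib (G : SimpleGraph V) : Sym2 V → ℚ :=
  Sym2.lift ⟨fun u v =>
      ((mA G u v : ℚ) + (m0 G u v : ℚ) / 2) * ((mA G v u : ℚ) + (m0 G u v : ℚ) / 2),
    fun u v => by dsimp only; rw [m0_comm G u v]; ring⟩

/-- The revised edge Szeged index `Sz*_e`. -/
noncomputable def revEdgeSzeged (G : SimpleGraph V) : ℚ :=
  ∑ e ∈ edgeFinset' G, szContrib G e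

/-- The summand of the edge Szeged index attached to an edge. -/
noncomputable def eSzContrib (G : SimpleGraph V) : Sym2 V → ℚ :=
  Sym2.lift ⟨fun u v => (mA G u v : ℚ) * (mA G v u : ℚ), fun u v => by dsimp only; ring⟩

/-- The edge Szeged index `Sz_e`. -/
noncomputable def edgeSzeged (G : SimpleGraph V) : ℚ :=
  ∑ e ∈ edgeFinset' G, eSzContrib G e

/-- The diameter of `G` equals `d` : every distance is at most `d` and some distance equals `d`. -/
def hasDiam (G : SimpleGraph V) (d : ℕ) : Prop :=
  (∀ u v : V, G.dist u v ≤ d) ∧ ∃ u v : V, G.dist u v = d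

/-- A unicyclic graph: connected with exactly one cycle, equivalently connected with
as many edges as vertices. -/
def IsUnicyclic (G : SimpleGraph V) : Prop :=
  G.Connected ∧ numEdges G = Fintype.card V

end Index

/-- The graph induced by a parent function: `x` is adjacent to `y` iff they are distinct and
one is the parent of the other. -/
def graphOfParent {W : Type} (par : W → W) : SimpleGraph W where
  Adj x y := x ≠ y ∧ (par x = y ∨ par y = x)
  symm := by constructor; rintro x y ⟨h1, h2⟩; exact ⟨Ne.symm h1, Or.symm h2⟩
  loopless := ⟨fun x h => h.1 rfl⟩

/-- Vertex type for the generic tree: a root (`none`), a first path with `k1` vertices,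
a second path with `k2` vertices and `b` pendant vertices. -/
abbrev genTreeV (k1 k2 b : ℕ) : Type := Option (Fin k1 ⊕ Fin k2 ⊕ Fin b)

/-- Parent function of the generic tree `genTree k1 k2 b j`:  the two paths hang off
the root, and the `b` pendant vertices are attached to the vertex of the first path at
distance `j` from the root (to the root itself if `j = 0`). -/
def genTreePar (k1 k2 b j : ℕ) : genTreeV k1 k2 b → genTreeV k1 k2 b
  | none => none
  | some (Sum.inl p) =>
      if 0 < p.val then
        some (Sum.inl ⟨p.val - 1, lt_of_le_of_lt (Nat.sub_le _ _) p.isLt⟩)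
      else none
  | some (Sum.inr (Sum.inl q)) =>
      if 0 < q.val then
        some (Sum.inr (Sum.inl ⟨q.val - 1, lt_of_le_of_lt (Nat.sub_le _ _) q.isLt⟩))
      else none
  | some (Sum.inr (Sum.inr _)) =>
      if h : 0 < j ∧ j - 1 < k1 then some (Sum.inl ⟨j - 1, h.2⟩) else none

/-- The generic rooted tree: a root with two paths of lengths `k1`, `k2` hanging from it and
`b` pendant vertices attached at distance `j` along the first path. -/
def genTree (k1 k2 b j : ℕ) : RootedGraph where
  V := genTreeV k1 k2 b
  fintypeV := inferInstance
  decEqV := inferInstance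
  G := graphOfParent (genTreePar k1 k2 b j)
  root := none

/-- `P_m`: the path on `m` vertices rooted at one endpoint. -/
def pathRT (m : ℕ) : RootedGraph := genTree (m - 1) 0 0 0

/-- `S_m`: the star on `m` vertices rooted at its center. -/
def starRT (m : ℕ) : RootedGraph := genTree 0 0 (m - 1) 0

/-- `P^i_{k1,k2}`: two paths on `k1+1` and `k2+1` vertices and a star `S_{i+1}` glued at
a common root. -/
def PP (k1 k2 i : ℕ) : RootedGraph := genTree k1 k2 i 0

/-- `P^i_k = P^i_{k,0}`. -/
def Pk (k i : ℕ) : RootedGraph := genTree k 0 i 0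

/-- `T*(l2, b, i)`: the tree obtained from a path `w_0 w_1 ⋯ w_{l2}`, rooted at `w_{l2}`,
by attaching `b` pendant vertices at `w_i`. -/
def Tstar (l2 b i : ℕ) : RootedGraph := genTree l2 0 b (l2 - i)

/-- `C_g(T_1, …, T_g)` : the unicyclic graph obtained from the cycle `C_g` by identifying
the root of `T_i` with the `i`-th cycle vertex. -/
def cycleTrees (g : ℕ) (T : Fin g → RootedGraph) : SimpleGraph (Σ i, (T i).V) where
  Adj a b := a ≠ b ∧
    ((∃ (i : Fin g) (x y : (T i).V), a = ⟨i, x⟩ ∧ b = ⟨i, y⟩ ∧ (T i).G.Adj x y) ∨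
     (a.2 = (T a.1).root ∧ b.2 = (T b.1).root ∧
       (((a.1 : ℕ) + 1) % g = (b.1 : ℕ) ∨ ((b.1 : ℕ) + 1) % g = (a.1 : ℕ))))
  symm := by
    constructor
    rintro a b ⟨hne, h⟩
    refine ⟨hne.symm, ?_⟩
    rcases h with ⟨i, x, y, ha, hb, hxy⟩ | ⟨h1, h2, h3⟩
    · exact Or.inl ⟨i, y, x, hb, ha, hxy.symm⟩
    · exact Or.inr ⟨h2, h1, h3.symm⟩
  loopless := ⟨fun a h => h.1 rfl⟩

/-!
Since `m_u + m_v + m_0 = |E|` for every edge `uv`, the difference `Sz*_e - Sz_e` is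
`∑_e (|E| m_0(e) / 2 - m_0(e)² / 4)`, and `|E| = n` for a unicyclic graph, so only the numbers
`m_0(e)` matter. A shortest path in `C_g(T_1, …, T_g)` stays inside one tree or runs down to a
root, around the cycle and up again. Hence a tree edge is equidistant only from itself
(`m_0 = 1`), while a cycle edge has `m_0 = 2` on an even cycle (itself and the opposite cycle edge)
and `m_0 = 1 + |E(T_j)|` on an odd one, where `v_j` is the cycle vertex opposite to it.
-/

open SimpleGraph

section GraphMetric

variable {V : Type} {G : SimpleGraph V}

lemma le_add_dist_of_lipschitz (f : V → ℕ) (hf : ∀ u v, G.Adj u v → f u ≤ f v + 1)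
    {u v : V} (h : G.Reachable u v) : f u ≤ f v + G.dist u v := by
  obtain ⟨p, hp⟩ := h.exists_walk_length_eq_dist
  rw [← hp]
  clear hp h
  induction p with
  | nil => simp
  | cons hadj q ih => have := hf _ _ hadj; simp only [Walk.length_cons]; omega

lemma dist_le_dist_add_one_of_adj {u v w : V} (h : G.Adj v w) :
    G.dist v u ≤ G.dist w u + 1 := by
  rw [dist_comm, dist_comm (u := w)]
  rcases h.diff_dist_adj (u := u) with h | h | h <;> omega

lemma dist_map_le {W : Type} {H : SimpleGraph W} (f : G →g H) {u v : V} (h : G.Reachable u v) :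
    H.dist (f u) (f v) ≤ G.dist u v := by
  obtain ⟨p, hp⟩ := h.exists_walk_length_eq_dist
  simpa [hp] using dist_le (p.map f)

lemma dist_add_dist_le_length [DecidableEq V] {u v w : V} (p : G.Walk u v)
    (hw : w ∈ p.support) : G.dist u w + G.dist w v ≤ p.length := by
  have hsplit := congrArg Walk.length (p.take_spec hw)
  rw [Walk.length_append] at hsplit
  have := dist_le (p.takeUntil w hw)
  have := dist_le (p.dropUntil w hw)
  omega

lemma reachable_deleteEdges_of_dist_eq_add_one {x y z : V} (hxy : G.Adj x y)
    (hz : G.Reachable z x) (hd : G.dist z y = G.dist z x + 1) :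
    (G.deleteEdges {s(x, y)}).Reachable z x := by
  classical
  obtain ⟨p, hp⟩ := hz.exists_walk_length_eq_dist
  refine reachable_deleteEdges_iff_exists_walk.mpr ⟨p, fun he => ?_⟩
  have := dist_add_dist_le_length p (p.snd_mem_support_of_mem_edges he)
  rw [hp, dist_eq_one_iff_adj.mpr hxy.symm] at this
  omega

end GraphMetric

section Tree

variable {V : Type} [Fintype V] [DecidableEq V] {G : SimpleGraph V}

lemma mem_edgeFinset' {e : Sym2 V} : e ∈ edgeFinset' G ↔ e ∈ G.edgeSet :=
  Set.Finite.mem_toFinset _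

lemma evDist_mk (x y w : V) : evDist G s(x, y) w = min (G.dist x w) (G.dist y w) := rfl

/-- The ends of another edge lie on the same side of the bridge `s(x, y)`, and on each side
`dist · y - dist · x` is constantly `1` or constantly `-1`. -/
lemma evDist_ne_of_isTree_of_adj (hG : G.IsTree) {x y : V} (hxy : G.Adj x y) {e : Sym2 V}
    (he : e ∈ G.edgeSet) (hne : e ≠ s(x, y)) : evDist G e x ≠ evDist G e y := by
  induction e with
  | _ z z' =>
  have hsep : ¬ (G.deleteEdges {s(x, y)}).Reachable x y :=
    isBridge_iff.mp (isAcyclic_iff_forall_adj_isBridge.mp hG.isAcyclic hxy)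
  have hzz' : (G.deleteEdges {s(x, y)}).Reachable z z' :=
    (deleteEdges_adj.mpr ⟨he, by simpa using hne⟩).reachable
  have reach_y {w : V} (hw : G.dist w x = G.dist w y + 1) :
      (G.deleteEdges {s(x, y)}).Reachable w y := by
    rw [Sym2.eq_swap]
    exact reachable_deleteEdges_of_dist_eq_add_one hxy.symm (hG.connected w y) hw
  have reach_x {w : V} (hw : G.dist w y = G.dist w x + 1) :
      (G.deleteEdges {s(x, y)}).Reachable w x :=
    reachable_deleteEdges_of_dist_eq_add_one hxy (hG.connected w x) hw
  rw [evDist_mk, evDist_mk]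
  rcases hG.dist_eq_dist_add_one_of_adj z hxy with hz | hz <;>
    rcases hG.dist_eq_dist_add_one_of_adj z' hxy with hz' | hz'
  · omega
  · exact absurd (((reach_x hz').symm.trans hzz'.symm).trans (reach_y hz)) hsep
  · exact absurd (((reach_x hz).symm.trans hzz').trans (reach_y hz')) hsep
  · omega

lemma numEdges_add_one_of_isTree (hG : G.IsTree) : numEdges G + 1 = Fintype.card V := by
  classical
  have : edgeFinset' G = G.edgeFinset := by ext; simp [mem_edgeFinset']
  rw [numEdges, this, hG.card_edgeFinset]

end Tree

section Szeged

variable {V : Type} [Fintype V] [DecidableEq V] (G : SimpleGraph V)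

noncomputable def m0Sym : Sym2 V → ℕ := Sym2.lift ⟨m0 G, m0_comm G⟩

@[simp]
lemma m0Sym_mk (u v : V) : m0Sym G s(u, v) = m0 G u v := rfl

lemma mA_add_mA_add_m0 (u v : V) : mA G u v + mA G v u + m0 G u v = numEdges G := by
  classical
  simp only [mA, m0, numEdges, Finset.card_filter]
  rw [Finset.card_eq_sum_ones, ← Finset.sum_add_distrib, ← Finset.sum_add_distrib]
  refine Finset.sum_congr rfl fun f _ => ?_
  split_ifs <;> omega

lemma revEdgeSzeged_eq_edgeSzeged_add :
    revEdgeSzeged G = edgeSzeged G +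
      ∑ e ∈ edgeFinset' G, ((numEdges G : ℚ) / 2 * m0Sym G e - (m0Sym G e : ℚ) ^ 2 / 4) := by
  rw [revEdgeSzeged, edgeSzeged, ← Finset.sum_add_distrib]
  refine Finset.sum_congr rfl fun e _ => ?_
  induction e with
  | _ u v =>
  have h : (mA G u v : ℚ) + mA G v u + m0 G u v = numEdges G := by
    exact_mod_cast mA_add_mA_add_m0 G u v
  simp only [szContrib, eSzContrib, m0Sym_mk, Sym2.lift_mk]
  linear_combination (m0 G u v : ℚ) / 2 * h

lemma m0_eq_sum (u v : V) :
    m0 G u v = ∑ e ∈ edgeFinset' G, if evDist G e u = evDist G e v then 1 else 0 := by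
  classical
  rw [m0, Finset.card_filter]

end Szeged

open Fin.CommRing

def cycDist {g : ℕ} (c a : Fin g) : ℕ := min (a - c).val (c - a).val

section CycDist

variable {g : ℕ} [NeZero g]

lemma cycDist_self (a : Fin g) : cycDist a a = 0 := by simp [cycDist]

lemma val_natCast_sub_natCast {j k : ℕ} (hj : j < g) (hk : k < g) :
    ((j : Fin g) - (k : Fin g)).val = if k ≤ j then j - k else g + j - k := by
  rw [Fin.val_sub, Fin.val_cast_of_lt hj, Fin.val_cast_of_lt hk]
  split_ifs with h
  · rw [show g - k + j = j - k + g by omega, Nat.add_mod_right, Nat.mod_eq_of_lt (by omega)]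
  · rw [Nat.mod_eq_of_lt (by omega)]; omega

lemma cycDist_add_natCast (a : Fin g) {k j : ℕ} (hk : k < g) (hj : j < g) :
    cycDist (a + (k : Fin g)) (a + (j : Fin g)) =
      min (if k ≤ j then j - k else g + j - k) (if j ≤ k then k - j else g + k - j) := by
  rw [cycDist, add_sub_add_left_eq_sub, add_sub_add_left_eq_sub, val_natCast_sub_natCast hj hk,
    val_natCast_sub_natCast hk hj]

lemma add_natCast_eq_add_natCast_iff (a : Fin g) {k j : ℕ} (hk : k < g) (hj : j < g) :
    a + (k : Fin g) = a + (j : Fin g) ↔ k = j := by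
  rw [add_right_inj, Fin.ext_iff, Fin.val_cast_of_lt hk, Fin.val_cast_of_lt hj]

lemma exists_eq_add_natCast (a c : Fin g) : ∃ k < g, c = a + (k : Fin g) :=
  ⟨(c - a).val, (c - a).isLt, by rw [Fin.cast_val_eq_self, add_sub_cancel]⟩

lemma cycDist_add_right (c a b : Fin g) : cycDist (c + b) (a + b) = cycDist c a := by
  simp only [cycDist, add_sub_add_right_eq_sub]

lemma cycDist_add_natCast_self (a : Fin g) {k : ℕ} (hk : k < g) :
    cycDist (a + (k : Fin g)) a = min k (g - k) := by
  have h := cycDist_add_natCast a hk (Nat.pos_of_neZero g)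
  rw [Nat.cast_zero, add_zero] at h
  rw [h]
  split_ifs <;> omega

lemma cycDist_add_natCast_add_one (hg : 1 < g) (a : Fin g) {k : ℕ} (hk : k < g) :
    cycDist (a + (k : Fin g)) (a + 1) = if k = 0 then 1 else min (k - 1) (g - k + 1) := by
  have h := cycDist_add_natCast a hk hg
  rw [Nat.cast_one] at h
  rw [h]
  split_ifs <;> omega

lemma add_natCast_add_one (a : Fin g) {k : ℕ} (hk : k < g) :
    a + (k : Fin g) + 1 = a + ((if k + 1 < g then k + 1 else 0 : ℕ) : Fin g) := by
  rw [add_assoc, ← Nat.cast_add_one]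
  split_ifs with h
  · rfl
  · rw [show k + 1 = g by omega, Fin.natCast_self, Nat.cast_zero]

lemma cycDist_le_cycDist_add_one (a i : Fin g) :
    cycDist i a ≤ cycDist (i + 1) a + 1 ∧ cycDist (i + 1) a ≤ cycDist i a + 1 := by
  obtain ⟨k, hk, rfl⟩ := exists_eq_add_natCast a i
  rw [add_natCast_add_one a hk, cycDist_add_natCast_self a hk,
    cycDist_add_natCast_self a (by split_ifs <;> omega)]
  split_ifs <;> omega

lemma cycDist_eq_cycDist_add_one_iff (hg : 3 ≤ g) (a c : Fin g) :
    cycDist c a = cycDist c (a + 1) ↔ Odd g ∧ c = a + (((g + 1) / 2 : ℕ) : Fin g) := by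
  obtain ⟨k, hk, rfl⟩ := exists_eq_add_natCast a c
  rw [add_natCast_eq_add_natCast_iff a hk (by omega), cycDist_add_natCast_self a hk,
    cycDist_add_natCast_add_one (by omega) a hk, Nat.odd_iff]
  split_ifs <;> omega

lemma min_cycDist_eq_min_cycDist_add_one_iff (hg : 3 ≤ g) (a c : Fin g) :
    min (cycDist c a) (cycDist (c + 1) a) = min (cycDist c (a + 1)) (cycDist (c + 1) (a + 1)) ↔
      c = a ∨ ¬ Odd g ∧ c = a + ((g / 2 : ℕ) : Fin g) := by
  obtain ⟨k, hk, rfl⟩ := exists_eq_add_natCast a c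
  have hk0 : a + (k : Fin g) = a ↔ k = 0 := by
    simpa using add_natCast_eq_add_natCast_iff a hk (Nat.pos_of_neZero g)
  rw [hk0, add_natCast_eq_add_natCast_iff a hk (by omega), cycDist_add_right,
    cycDist_add_natCast_self a hk, cycDist_add_natCast_add_one (by omega) a hk,
    add_natCast_add_one a hk, cycDist_add_natCast_self a (by split_ifs <;> omega), Nat.odd_iff]
  split_ifs <;> omega

end CycDist

section CycleTrees

variable {g : ℕ} [NeZero g] {T : Fin g → RootedGraph}

lemma val_add_one_eq_mod (hg : 1 < g) (i : Fin g) : ((i + 1 : Fin g) : ℕ) = (i.val + 1) % g := by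
  rw [Fin.val_add, Fin.val_one', Nat.mod_eq_of_lt hg]

lemma add_natCast_ne_self (a : Fin g) {k : ℕ} (hk0 : 0 < k) (hk : k < g) :
    a + (k : Fin g) ≠ a := by
  intro h
  have := (add_natCast_eq_add_natCast_iff a hk (Nat.pos_of_neZero g)).mp (by simpa using h)
  omega

lemma cycleTrees_adj_mk_mk {i : Fin g} {x y : (T i).V} (h : (T i).G.Adj x y) :
    (cycleTrees g T).Adj ⟨i, x⟩ ⟨i, y⟩ :=
  ⟨fun hxy => h.ne (eq_of_heq (Sigma.mk.inj_iff.mp hxy).2), Or.inl ⟨i, x, y, rfl, rfl, h⟩⟩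

lemma cycleTrees_adj_root_add_one (hg : 1 < g) (i : Fin g) :
    (cycleTrees g T).Adj ⟨i, (T i).root⟩ ⟨i + 1, (T (i + 1)).root⟩ := by
  refine ⟨fun h => ?_, Or.inr ⟨rfl, rfl, Or.inl (val_add_one_eq_mod hg i).symm⟩⟩
  exact add_natCast_ne_self i one_pos hg (by simpa using (congrArg Sigma.fst h).symm)

lemma cycleTrees_adj_cases (hg : 1 < g) {w w' : Σ i, (T i).V} (h : (cycleTrees g T).Adj w w') :
    (∃ (i : Fin g) (x y : (T i).V), w = ⟨i, x⟩ ∧ w' = ⟨i, y⟩ ∧ (T i).G.Adj x y) ∨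
      w.2 = (T w.1).root ∧ w'.2 = (T w'.1).root ∧ (w'.1 = w.1 + 1 ∨ w.1 = w'.1 + 1) := by
  obtain ⟨-, h | ⟨hw, hw', h⟩⟩ := h
  · exact Or.inl h
  · simp only [Fin.ext_iff, val_add_one_eq_mod hg]
    exact Or.inr ⟨hw, hw', h.imp Eq.symm Eq.symm⟩

variable (T) in
def treeHom (i : Fin g) : (T i).G →g cycleTrees g T where
  toFun x := ⟨i, x⟩
  map_rel' := cycleTrees_adj_mk_mk

@[simp]
lemma treeHom_apply (i : Fin g) (x : (T i).V) : treeHom T i x = ⟨i, x⟩ := rfl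

lemma treeHom_injective (i : Fin g) : Function.Injective (treeHom T i) :=
  fun _ _ h => eq_of_heq (Sigma.mk.inj_iff.mp h).2

lemma reachable_mk_mk (hT : ∀ i, (T i).G.Connected) (i : Fin g) (x y : (T i).V) :
    (cycleTrees g T).Reachable ⟨i, x⟩ ⟨i, y⟩ :=
  (hT i x y).map (treeHom T i)

lemma dist_mk_mk_le (hT : ∀ i, (T i).G.Connected) (i : Fin g) (x y : (T i).V) :
    (cycleTrees g T).dist ⟨i, x⟩ ⟨i, y⟩ ≤ (T i).G.dist x y :=
  dist_map_le (treeHom T i) (hT i x y)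

lemma exists_walk_root_add_natCast (hg : 1 < g) (c : Fin g) (k : ℕ) :
    ∃ p : (cycleTrees g T).Walk ⟨c, (T c).root⟩ ⟨c + k, (T (c + k)).root⟩, p.length = k := by
  induction k generalizing c with
  | zero => exact ⟨Walk.nil.copy rfl (by rw [Nat.cast_zero, add_zero]), by simp⟩
  | succ k ih =>
    obtain ⟨p, hp⟩ := ih (c + 1)
    have hc : c + ((k + 1 : ℕ) : Fin g) = c + 1 + (k : Fin g) := by push_cast; ring
    exact ⟨(Walk.cons (cycleTrees_adj_root_add_one hg c) p).copy rfl (by rw [hc]), by simp [hp]⟩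

lemma dist_root_root_le_val_sub (hg : 1 < g) (c a : Fin g) :
    (cycleTrees g T).dist ⟨c, (T c).root⟩ ⟨a, (T a).root⟩ ≤ (a - c).val := by
  obtain ⟨k, hk, rfl⟩ := exists_eq_add_natCast c a
  obtain ⟨p, hp⟩ := exists_walk_root_add_natCast (T := T) hg c k
  rw [add_sub_cancel_left, Fin.val_cast_of_lt hk]
  exact (dist_le p).trans_eq hp

lemma dist_root_root_le (hg : 1 < g) (c a : Fin g) :
    (cycleTrees g T).dist ⟨c, (T c).root⟩ ⟨a, (T a).root⟩ ≤ cycDist c a :=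
  le_min (dist_root_root_le_val_sub hg c a) (dist_comm.trans_le (dist_root_root_le_val_sub hg a c))

lemma cycleTrees_connected (hg : 1 < g) (hT : ∀ i, (T i).G.Connected) :
    (cycleTrees g T).Connected := by
  have hroot (i : Fin g) (z : (T i).V) : (cycleTrees g T).Reachable ⟨i, z⟩ ⟨0, (T 0).root⟩ := by
    obtain ⟨p, -⟩ := exists_walk_root_add_natCast (T := T) hg 0 i.val
    rw [Fin.cast_val_eq_self, zero_add] at p
    exact (reachable_mk_mk hT i z (T i).root).trans ⟨p.reverse⟩
  have : Nonempty (Σ i, (T i).V) := ⟨⟨0, (T 0).root⟩⟩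
  exact ⟨fun ⟨i, z⟩ ⟨j, z'⟩ => (hroot i z).trans (hroot j z').symm⟩

variable (T) in
noncomputable def cycleTreesDist (w : Σ i, (T i).V) (a : Fin g) (x : (T a).V) : ℕ :=
  if h : w.1 = a then (T a).G.dist (h ▸ w.2) x
  else (T w.1).G.dist w.2 (T w.1).root + cycDist w.1 a + (T a).G.dist (T a).root x

lemma cycleTreesDist_root (c a : Fin g) (x : (T a).V) :
    cycleTreesDist T ⟨c, (T c).root⟩ a x = cycDist c a + (T a).G.dist (T a).root x := by
  by_cases h : c = a
  · subst h; simp [cycleTreesDist, cycDist_self]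
  · simp [cycleTreesDist, h]

lemma cycleTreesDist_le_add_one (hg : 1 < g) (a : Fin g) (x : (T a).V) {w w' : Σ i, (T i).V}
    (h : (cycleTrees g T).Adj w w') : cycleTreesDist T w a x ≤ cycleTreesDist T w' a x + 1 := by
  rcases cycleTrees_adj_cases hg h with ⟨i, z, z', rfl, rfl, hzz'⟩ | ⟨hw, hw', hij⟩
  · by_cases hi : i = a
    · subst hi
      simpa [cycleTreesDist] using dist_le_dist_add_one_of_adj hzz'
    · have := dist_le_dist_add_one_of_adj (u := (T i).root) hzz'
      simp only [cycleTreesDist, hi, dite_false]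
      omega
  · obtain ⟨i, z⟩ := w
    obtain ⟨j, z'⟩ := w'
    dsimp only at hw hw' hij
    subst hw hw'
    rw [cycleTreesDist_root, cycleTreesDist_root]
    rcases hij with rfl | rfl
    · linarith [(cycDist_le_cycDist_add_one a i).1]
    · linarith [(cycDist_le_cycDist_add_one a j).2]

lemma dist_le_cycleTreesDist (hg : 1 < g) (hT : ∀ i, (T i).G.Connected) (a : Fin g)
    (x : (T a).V) (w : Σ i, (T i).V) : (cycleTrees g T).dist w ⟨a, x⟩ ≤ cycleTreesDist T w a x := by
  obtain ⟨c, z⟩ := w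
  by_cases h : c = a
  · subst h
    simpa [cycleTreesDist] using dist_mk_mk_le hT c z x
  · have hconn := cycleTrees_connected hg hT
    calc (cycleTrees g T).dist ⟨c, z⟩ ⟨a, x⟩
        ≤ (cycleTrees g T).dist ⟨c, z⟩ ⟨c, (T c).root⟩
          + (cycleTrees g T).dist ⟨c, (T c).root⟩ ⟨a, (T a).root⟩
          + (cycleTrees g T).dist ⟨a, (T a).root⟩ ⟨a, x⟩ :=
          hconn.dist_triangle.trans (by gcongr; exact hconn.dist_triangle)
      _ ≤ cycleTreesDist T ⟨c, z⟩ a x := by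
          simp only [cycleTreesDist, h, dite_false]
          gcongr
          · exact dist_mk_mk_le hT c z _
          · exact dist_root_root_le hg c a
          · exact dist_mk_mk_le hT a _ x

/-- `cycleTreesDist T · a x` vanishes at `⟨a, x⟩` and grows by at most one along edges, so it is
also a lower bound for the distance. -/
lemma dist_eq_cycleTreesDist (hg : 1 < g) (hT : ∀ i, (T i).G.Connected) (a : Fin g)
    (x : (T a).V) (w : Σ i, (T i).V) : (cycleTrees g T).dist w ⟨a, x⟩ = cycleTreesDist T w a x := by
  refine le_antisymm (dist_le_cycleTreesDist hg hT a x w) ?_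
  have := le_add_dist_of_lipschitz _ (fun _ _ => cycleTreesDist_le_add_one hg a x)
    ((cycleTrees_connected hg hT).preconnected w ⟨a, x⟩)
  simpa [cycleTreesDist] using this

end CycleTrees

section Distances

variable {g : ℕ} [NeZero g] {T : Fin g → RootedGraph} (hg : 1 < g)
  (hT : ∀ i, (T i).G.Connected)
include hg hT

lemma dist_mk_mk (i : Fin g) (z x : (T i).V) :
    (cycleTrees g T).dist ⟨i, z⟩ ⟨i, x⟩ = (T i).G.dist z x := by
  simp [dist_eq_cycleTreesDist hg hT, cycleTreesDist]

lemma dist_mk_mk_of_ne {c a : Fin g} (h : c ≠ a) (z : (T c).V) (x : (T a).V) :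
    (cycleTrees g T).dist ⟨c, z⟩ ⟨a, x⟩ =
      (T c).G.dist z (T c).root + cycDist c a + (T a).G.dist (T a).root x := by
  simp [dist_eq_cycleTreesDist hg hT, cycleTreesDist, h]

lemma dist_root_mk (c a : Fin g) (x : (T a).V) :
    (cycleTrees g T).dist ⟨c, (T c).root⟩ ⟨a, x⟩ = cycDist c a + (T a).G.dist (T a).root x := by
  rw [dist_eq_cycleTreesDist hg hT, cycleTreesDist_root]

lemma dist_mk_root (c a : Fin g) (z : (T c).V) :
    (cycleTrees g T).dist ⟨c, z⟩ ⟨a, (T a).root⟩ = (T c).G.dist z (T c).root + cycDist c a := by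
  by_cases h : c = a
  · subst h; simp [dist_mk_mk hg hT, cycDist_self]
  · simp [dist_mk_mk_of_ne hg hT h]

end Distances

section Edges

variable {g : ℕ} [NeZero g] {T : Fin g → RootedGraph}

variable (T) in
def cycleEdge (a : Fin g) : Sym2 (Σ i, (T i).V) :=
  s(⟨a, (T a).root⟩, ⟨a + 1, (T (a + 1)).root⟩)

lemma add_one_add_one_ne_self (hg : 3 ≤ g) (a : Fin g) : a + 1 + 1 ≠ a := by
  have := add_natCast_ne_self a two_pos (by omega : 2 < g)
  rwa [Nat.cast_ofNat, ← one_add_one_eq_two, ← add_assoc] at this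

lemma cycleEdge_injective (hg : 3 ≤ g) : Function.Injective (cycleEdge T) := by
  intro a b h
  rcases Sym2.eq_iff.mp h with ⟨h, -⟩ | ⟨h, h'⟩
  · exact congrArg Sigma.fst h
  · have ha : a = b + 1 := congrArg Sigma.fst h
    have hb : a + 1 = b := congrArg Sigma.fst h'
    exact absurd (ha ▸ hb) (add_one_add_one_ne_self hg b)

lemma fst_eq_of_map_treeHom_eq {i : Fin g} {f : Sym2 (T i).V} {e : Sym2 (Σ i, (T i).V)}
    (he : f.map (treeHom T i) = e) {w : Σ i, (T i).V} (hw : w ∈ e) : w.1 = i := by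
  subst he
  obtain ⟨x, -, rfl⟩ := Sym2.mem_map.mp hw
  rfl

lemma mem_edgeSet_cycleTrees (hg : 1 < g) {e : Sym2 (Σ i, (T i).V)} :
    e ∈ (cycleTrees g T).edgeSet ↔
      (∃ i, ∃ f ∈ (T i).G.edgeSet, f.map (treeHom T i) = e) ∨ ∃ a, cycleEdge T a = e := by
  refine ⟨fun he => ?_, ?_⟩
  · induction e with
    | _ w w' =>
    rcases cycleTrees_adj_cases hg he with ⟨i, x, y, rfl, rfl, hxy⟩ | ⟨hw, hw', hij⟩
    · exact Or.inl ⟨i, s(x, y), hxy, rfl⟩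
    · obtain ⟨i, z⟩ := w
      obtain ⟨j, z'⟩ := w'
      dsimp only at hw hw' hij
      subst hw hw'
      rcases hij with rfl | rfl
      · exact Or.inr ⟨i, rfl⟩
      · exact Or.inr ⟨j, Sym2.eq_swap⟩
  · rintro (⟨i, f, hf, rfl⟩ | ⟨a, rfl⟩)
    · induction f with
      | _ x y => exact cycleTrees_adj_mk_mk hf
    · exact cycleTrees_adj_root_add_one hg a

lemma edgeFinset'_cycleTrees (hg : 1 < g) :
    edgeFinset' (cycleTrees g T) =
      (univ.biUnion fun i => (edgeFinset' (T i).G).image (Sym2.map (treeHom T i))) ∪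
        univ.image (cycleEdge T) := by
  ext e
  simp [mem_edgeFinset', mem_edgeSet_cycleTrees hg]

lemma sum_edgeFinset'_cycleTrees (hg : 3 ≤ g) {M : Type*} [AddCommMonoid M]
    (φ : Sym2 (Σ i, (T i).V) → M) :
    ∑ e ∈ edgeFinset' (cycleTrees g T), φ e =
      ∑ i, ∑ e ∈ edgeFinset' (T i).G, φ (e.map (treeHom T i)) + ∑ a, φ (cycleEdge T a) := by
  have htree : Set.PairwiseDisjoint ↑(univ : Finset (Fin g))
      fun i => (edgeFinset' (T i).G).image (Sym2.map (treeHom T i)) := by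
    intro i _ j _ hij
    refine Finset.disjoint_left.mpr fun e hi hj => hij ?_
    obtain ⟨f, -, hf⟩ := Finset.mem_image.mp hi
    obtain ⟨f', -, hf'⟩ := Finset.mem_image.mp hj
    exact (fst_eq_of_map_treeHom_eq hf e.out_fst_mem).symm.trans
      (fst_eq_of_map_treeHom_eq hf' e.out_fst_mem)
  have hcycle : Disjoint (univ.biUnion fun i => (edgeFinset' (T i).G).image (Sym2.map (treeHom T i)))
      (univ.image (cycleEdge T)) := by
    simp only [Finset.disjoint_right, Finset.mem_image, Finset.mem_biUnion, Finset.mem_univ,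
      true_and, not_exists, not_and, forall_exists_index, forall_apply_eq_imp_iff]
    intro a i f _ hf
    have h1 := fst_eq_of_map_treeHom_eq hf (Sym2.mem_mk_left _ _)
    have h2 := fst_eq_of_map_treeHom_eq hf (Sym2.mem_mk_right _ _)
    exact add_natCast_ne_self a one_pos (by omega) (by simpa using h2.trans h1.symm)
  rw [edgeFinset'_cycleTrees (by omega), Finset.sum_union hcycle, Finset.sum_biUnion htree,
    Finset.sum_image fun _ _ _ _ h => cycleEdge_injective hg h]
  congr 1
  refine Finset.sum_congr rfl fun i _ => Finset.sum_image fun _ _ _ _ h => ?_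
  exact Sym2.map.injective (treeHom_injective i) h

end Edges

section EdgeDistances

variable {g : ℕ} [NeZero g] {T : Fin g → RootedGraph} (hg : 1 < g)
  (hT : ∀ i, (T i).G.Connected)
include hg hT

lemma evDist_map_treeHom (i : Fin g) (f : Sym2 (T i).V) (x : (T i).V) :
    evDist (cycleTrees g T) (f.map (treeHom T i)) ⟨i, x⟩ = evDist (T i).G f x := by
  induction f with
  | _ z z' => simp only [Sym2.map_mk, evDist_mk, treeHom_apply, dist_mk_mk hg hT]

lemma evDist_map_treeHom_of_ne {c a : Fin g} (h : c ≠ a) (f : Sym2 (T c).V) (x : (T a).V) :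
    evDist (cycleTrees g T) (f.map (treeHom T c)) ⟨a, x⟩ =
      evDist (T c).G f (T c).root + cycDist c a + (T a).G.dist (T a).root x := by
  induction f with
  | _ z z' =>
    simp only [Sym2.map_mk, evDist_mk, treeHom_apply, dist_mk_mk_of_ne hg hT h]
    omega

lemma evDist_map_treeHom_root (c a : Fin g) (f : Sym2 (T c).V) :
    evDist (cycleTrees g T) (f.map (treeHom T c)) ⟨a, (T a).root⟩ =
      evDist (T c).G f (T c).root + cycDist c a := by
  induction f with
  | _ z z' =>
    simp only [Sym2.map_mk, evDist_mk, treeHom_apply, dist_mk_root hg hT]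
    omega

lemma evDist_cycleEdge (c a : Fin g) (x : (T a).V) :
    evDist (cycleTrees g T) (cycleEdge T c) ⟨a, x⟩ =
      min (cycDist c a) (cycDist (c + 1) a) + (T a).G.dist (T a).root x := by
  simp only [cycleEdge, evDist_mk, dist_root_mk hg hT]
  omega

end EdgeDistances

section EquidistantEdges

variable {g : ℕ} [NeZero g] {T : Fin g → RootedGraph} (hg : 3 ≤ g)
  (hT : ∀ i, (T i).G.IsTree)
include hg hT

/-- Edges outside `T i` reach `x` and `y` through the root of `T i`, which is not equidistant from
`x` and `y`; inside the tree `T i` only `s(x, y)` itself is equidistant. -/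
lemma m0Sym_map_treeHom {i : Fin g} {f : Sym2 (T i).V} (hf : f ∈ (T i).G.edgeSet) :
    m0Sym (cycleTrees g T) (f.map (treeHom T i)) = 1 := by
  have hconn i := (hT i).connected
  induction f with
  | _ x y =>
  have hroot : (T i).G.dist (T i).root x ≠ (T i).G.dist (T i).root y :=
    (hT i).dist_ne_of_adj _ hf
  have hcycle (c : Fin g) : evDist (cycleTrees g T) (cycleEdge T c) ⟨i, x⟩ ≠
      evDist (cycleTrees g T) (cycleEdge T c) ⟨i, y⟩ := by
    rw [evDist_cycleEdge (by omega) hconn, evDist_cycleEdge (by omega) hconn]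
    omega
  have hother {c : Fin g} (hc : c ≠ i) (e : Sym2 (T c).V) :
      evDist (cycleTrees g T) (e.map (treeHom T c)) ⟨i, x⟩ ≠
        evDist (cycleTrees g T) (e.map (treeHom T c)) ⟨i, y⟩ := by
    rw [evDist_map_treeHom_of_ne (by omega) hconn hc, evDist_map_treeHom_of_ne (by omega) hconn hc]
    omega
  have hown {e : Sym2 (T i).V} (he : e ∈ edgeFinset' (T i).G) (hne : e ≠ s(x, y)) :
      evDist (cycleTrees g T) (e.map (treeHom T i)) ⟨i, x⟩ ≠
        evDist (cycleTrees g T) (e.map (treeHom T i)) ⟨i, y⟩ := by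
    rw [evDist_map_treeHom (by omega) hconn, evDist_map_treeHom (by omega) hconn]
    exact evDist_ne_of_isTree_of_adj (hT i) hf (mem_edgeFinset'.mp he) hne
  rw [Sym2.map_mk, treeHom_apply, treeHom_apply, m0Sym_mk, m0_eq_sum,
    sum_edgeFinset'_cycleTrees hg, Finset.sum_eq_zero fun c _ => if_neg (hcycle c), add_zero,
    Finset.sum_eq_single i (fun c _ hc => Finset.sum_eq_zero fun e _ => if_neg (hother hc e))
      (by simp),
    Finset.sum_eq_single s(x, y) (fun e he hne => if_neg (hown he hne))
      (fun h => absurd (mem_edgeFinset'.mpr hf) h)]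
  simp [evDist_mk]

lemma m0Sym_cycleEdge (a : Fin g) :
    m0Sym (cycleTrees g T) (cycleEdge T a) =
      if Odd g then numEdges (T (a + (((g + 1) / 2 : ℕ) : Fin g))).G + 1 else 2 := by
  have hconn i := (hT i).connected
  rw [cycleEdge, m0Sym_mk, m0_eq_sum, sum_edgeFinset'_cycleTrees hg]
  simp only [evDist_map_treeHom_root (by omega) hconn, evDist_cycleEdge (by omega) hconn,
    Nat.add_left_cancel_iff, SimpleGraph.dist_self, add_zero,
    cycDist_eq_cycDist_add_one_iff hg, min_cycDist_eq_min_cycDist_add_one_iff hg]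
  by_cases hodd : Odd g
  · simp [hodd, Finset.sum_ite_eq', numEdges, add_comm]
  · have hne : a ≠ a + ((g / 2 : ℕ) : Fin g) :=
      (add_natCast_ne_self a (by omega) (by omega)).symm
    simp [hodd, Finset.filter_or, Finset.filter_eq', Finset.card_pair hne]

end EquidistantEdges

section Counting

variable {g : ℕ} [NeZero g] {T : Fin g → RootedGraph} (hg : 3 ≤ g) (hT : ∀ i, (T i).G.IsTree)
include hg hT

lemma numEdges_cycleTrees : numEdges (cycleTrees g T) = Fintype.card (Σ i, (T i).V) := by
  rw [numEdges, Finset.card_eq_sum_ones, sum_edgeFinset'_cycleTrees hg, Fintype.card_sigma]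
  simp [← numEdges_add_one_of_isTree (hT _), Finset.sum_add_distrib, numEdges]

/-- On an odd cycle the antipode `a + (g + 1) / 2` of the cycle edge `a` runs over all of
`Fin g`, so every tree contributes once through it. -/
lemma sum_m0Sym_cycleTrees {M : Type*} [AddCommMonoid M] (φ : ℕ → M) :
    ∑ e ∈ edgeFinset' (cycleTrees g T), φ (m0Sym (cycleTrees g T) e) =
      (∑ i, numEdges (T i).G) • φ 1 +
        if Odd g then ∑ i, φ (numEdges (T i).G + 1) else g • φ 2 := by
  rw [sum_edgeFinset'_cycleTrees hg, Finset.sum_congr rfl fun i _ => Finset.sum_congr rfl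
    fun e he => by rw [m0Sym_map_treeHom hg hT (mem_edgeFinset'.mp he)]]
  simp only [m0Sym_cycleEdge hg hT, Finset.sum_const, ← Finset.sum_smul]
  split_ifs
  · rw [Fintype.sum_equiv (Equiv.addRight (((g + 1) / 2 : ℕ) : Fin g))
      (fun a => φ (numEdges (T (a + (((g + 1) / 2 : ℕ) : Fin g))).G + 1))
      (fun i => φ (numEdges (T i).G + 1)) fun _ => rfl]
    rfl
  · simp [numEdges]

end Counting

/-- For a unicyclic graph `G = C_g(T_1, …, T_g)` with `n` vertices,
`Sz*_e(G) = Sz_e(G) + (1/4)n(2n-1) + (1/4)(2n-3)g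
  + δ(g)[(1/4)g(5-4n) + (n²-n)/2 - (1/4)Σᵢ |E(Tᵢ)|²]`,
where `δ(g) = 1` if `g` is odd and `0` if `g` is even. -/
theorem stmt5 (g : ℕ) (hg : 3 ≤ g) (T : Fin g → RootedGraph) (hT : ∀ i, (T i).G.IsTree)
    (n : ℕ) (hn : Fintype.card (Σ i, (T i).V) = n) :
    revEdgeSzeged (cycleTrees g T) =
      edgeSzeged (cycleTrees g T) + (1 / 4 : ℚ) * n * (2 * n - 1)
        + (1 / 4 : ℚ) * (2 * n - 3) * g
        + (if Odd g then
            (1 / 4 : ℚ) * g * (5 - 4 * n) + ((n : ℚ) ^ 2 - n) / 2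
              - (1 / 4 : ℚ) * ∑ i, (numEdges (T i).G : ℚ) ^ 2
          else 0) := by
  have : NeZero g := ⟨by omega⟩
  have hsum : ∑ i, (numEdges (T i).G : ℚ) = n - g := by
    rw [← hn, Fintype.card_sigma]
    simp [← numEdges_add_one_of_isTree (hT _), Finset.sum_add_distrib]
  rw [revEdgeSzeged_eq_edgeSzeged_add, numEdges_cycleTrees hg hT, hn,
    sum_m0Sym_cycleTrees hg hT (fun k => (n : ℚ) / 2 * k - (k : ℚ) ^ 2 / 4)]
  split_ifs
  · have hterm (k : ℕ) : (n : ℚ) / 2 * ↑(k + 1) - ↑(k + 1) ^ 2 / 4 =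
        ((n : ℚ) / 2 - 1 / 4) + ((n : ℚ) / 2 - 1 / 2) * k - (k : ℚ) ^ 2 / 4 := by
      push_cast; ring
    simp only [hterm, Finset.sum_sub_distrib, Finset.sum_add_distrib, Finset.sum_const,
      Finset.card_univ, Fintype.card_fin, ← Finset.mul_sum, ← Finset.sum_div, nsmul_eq_mul]
    push_cast
    linear_combination ((n : ℚ) - 3 / 4) * hsum
  · simp only [nsmul_eq_mul]
    push_cast
    linear_combination ((n : ℚ) / 2 - 1 / 4) * hsum

end RevSzeged
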